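/- arXiv:1301.5206 — 2 statements merged into one kernel-verified Lean document; each statement's English description precedes it below -/
import Mathlib

section
/- (Eklof Lemma.) Let R be a ring, B a class of right R-modules, and M a right R-module admitting a filtration (M_α)_{α ≤ σ}, i.e., an increasing continuous chain of submodules with M_0 = 0 and M_σ = M, such that Ext¹_R(M_{α+1}/M_α, B) = 0 for every α < σ and every B ∈ B. Then Ext¹_R(M, B) = 0 for every B ∈ B. -/
open CategoryTheory CategoryTheory.Limits

universe u

variable (R : Type u) [Ring R]

/-- `Ext¹_R(A, B) = 0`: every short exact sequence `0 → B → E → A → 0` of `R`-modules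
splits. -/
def Ext1Zero (A B : ModuleCat.{u} R) : Prop :=
  ∀ (E : ModuleCat.{u} R) (i : B ⟶ E) (p : E ⟶ A) (w : i ≫ p = 0),
    (ShortComplex.mk i p w).ShortExact → ∃ s : A ⟶ E, s ≫ p = 𝟙 A

/-- `(F α)_{α ≤ σ}` is an increasing continuous chain of submodules of `M`
with `F 0 = 0` and `F σ = M`. -/
structure IsOrdinalFiltration {M : ModuleCat.{u} R} (σ : Ordinal.{u})
    (F : Ordinal.{u} → Submodule R M) : Prop where
  zero : F 0 = ⊥
  top : F σ = ⊤
  mono : ∀ {α β : Ordinal.{u}}, α ≤ β → β ≤ σ → F α ≤ F β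
  limit : ∀ {l : Ordinal.{u}}, l ≤ σ → Order.IsSuccLimit l →
    F l = ⨆ (α : Ordinal.{u}) (_ : α < l), F α

/-!
Fix a short exact sequence `0 → B → E → M → 0` with projection `p`. A submodule `D ≤ E` with
`D ⊓ ker p = ⊥` and `p(D) = F α` is a splitting of the sequence over `F α`. Pairs `(α, D)` of
this kind, ordered componentwise, satisfy Zorn's hypothesis: the union of a chain of `D`'s still
meets `ker p` trivially, and by continuity of the filtration it maps onto `F (sup α)`. If a
maximal pair had `α < σ`, the sequence `0 → B → p⁻¹(F (α + 1)) / D → F (α + 1) / F α → 0`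
would split, and the preimage of the image of a splitting is a larger pair over `F (α + 1)`.
So `α = σ`, `D` is a complement of `ker p`, and `p` has a section.
-/

open LinearMap Submodule

section

variable {R}

theorem Ext1Zero.exists_comp_eq_id {A B : ModuleCat.{u} R} (h : Ext1Zero R A B)
    {E : Type u} [AddCommGroup E] [Module R E] {i : B →ₗ[R] E} {p : E →ₗ[R] A}
    (hi : Function.Injective i) (hp : Function.Surjective p) (hip : Function.Exact i p) :
    ∃ s : A →ₗ[R] E, p ∘ₗ s = LinearMap.id := by
  obtain ⟨s, hs⟩ := h (.of R E) (ModuleCat.ofHom i) (ModuleCat.ofHom p)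
    (by ext; exact hip.apply_apply_eq_zero _) (ModuleCat.shortComplex_shortExact _ hip hi hp)
  exact ⟨s.hom, congrArg ModuleCat.Hom.hom hs⟩

section ShortExact

variable {B E M : Type*} [AddCommGroup B] [Module R B] [AddCommGroup E] [Module R E]
  [AddCommGroup M] [Module R M] {i : B →ₗ[R] E} {p : E →ₗ[R] M}

theorem injective_mkQ_comp_of_disjoint_range (hi : Function.Injective i) {D : Submodule R E}
    (hD : Disjoint D (range i)) : Function.Injective (D.mkQ ∘ₗ i) := by
  rw [← ker_eq_bot, ker_comp, ker_mkQ, eq_bot_iff]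
  intro b hb
  exact (map_eq_zero_iff i hi).1 (disjoint_def.1 hD _ hb (mem_range_self i b))

theorem Function.Exact.mkQ_comp_mapQ (hip : Function.Exact i p) (D : Submodule R E) :
    Function.Exact (D.mkQ ∘ₗ i) (D.mapQ (D.map p) p (le_comap_map _ _)) := by
  intro x
  obtain ⟨e, rfl⟩ := D.mkQ_surjective x
  simp only [mkQ_apply, mapQ_apply, Quotient.mk_eq_zero, mem_map, Set.mem_range, coe_comp,
    comp_apply]
  constructor
  · rintro ⟨d, hd, hde⟩
    obtain ⟨b, hb⟩ := (hip (e - d)).1 (by simp [hde])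
    exact ⟨b, (Submodule.Quotient.eq D).2 (by simpa [hb] using D.neg_mem hd)⟩
  · rintro ⟨b, hb⟩
    refine ⟨e - i b, ?_, by simp [hip.apply_apply_eq_zero]⟩
    simpa using (Submodule.Quotient.eq D).1 hb.symm

theorem Function.Exact.codRestrict_restrict (hip : Function.Exact i p) (N : Submodule R M) :
    Function.Exact (i.codRestrict (N.comap p) fun b => by simp [hip.apply_apply_eq_zero])
      (p.restrict fun _ h => h : N.comap p →ₗ[R] N) := by
  rintro ⟨e, he⟩
  simp [Subtype.ext_iff, hip e]

theorem surjective_restrict_comap (hp : Function.Surjective p) (N : Submodule R M) :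
    Function.Surjective (p.restrict fun _ h => h : N.comap p →ₗ[R] N) := by
  rintro ⟨n, hn⟩
  obtain ⟨e, rfl⟩ := hp n
  exact ⟨⟨e, hn⟩, rfl⟩

theorem surjective_mapQ_map (hp : Function.Surjective p) (D : Submodule R E) :
    Function.Surjective (D.mapQ (D.map p) p (le_comap_map _ _)) := by
  intro x
  obtain ⟨m, rfl⟩ := mkQ_surjective _ x
  obtain ⟨e, rfl⟩ := hp m
  exact ⟨D.mkQ e, rfl⟩

theorem exists_comp_eq_id_of_disjoint_ker_of_map_eq_top {D : Submodule R E}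
    (hD : Disjoint D (ker p)) (hDp : D.map p = ⊤) :
    ∃ s : M →ₗ[R] E, p ∘ₗ s = LinearMap.id := by
  have hbij : Function.Bijective (p.domRestrict D) :=
    ⟨injective_domRestrict_iff.2 hD, range_eq_top.1 (by simpa using hDp)⟩
  let e := LinearEquiv.ofBijective _ hbij
  exact ⟨D.subtype ∘ₗ e.symm.toLinearMap, LinearMap.ext e.apply_symm_apply⟩

end ShortExact

section PartialSplitting

variable {B : ModuleCat.{u} R} {E M : Type u} [AddCommGroup E] [Module R E]
  [AddCommGroup M] [Module R M] {i : B →ₗ[R] E} {p : E →ₗ[R] M}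

theorem exists_le_disjoint_ker_map_eq_top (hi : Function.Injective i)
    (hp : Function.Surjective p) (hip : Function.Exact i p) {D : Submodule R E}
    (hD : Disjoint D (ker p)) (hext : Ext1Zero R (.of R (M ⧸ D.map p)) B) :
    ∃ D' : Submodule R E, D ≤ D' ∧ Disjoint D' (ker p) ∧ D'.map p = ⊤ := by
  have hDi : Disjoint D (range i) := hip.linearMap_ker_eq ▸ hD
  obtain ⟨s, hs⟩ := hext.exists_comp_eq_id (injective_mkQ_comp_of_disjoint_range hi hDi)
    (surjective_mapQ_map hp D) (hip.mkQ_comp_mapQ D)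
  have hqs (y) : D.mapQ (D.map p) p (le_comap_map _ _) (s y) = y := LinearMap.congr_fun hs y
  refine ⟨(range s).comap D.mkQ, ?_, ?_, ?_⟩
  · intro d hd
    simp [(Submodule.Quotient.mk_eq_zero D).2 hd]
  · refine disjoint_def.2 fun x ⟨y, hy⟩ hx => disjoint_def.1 hD x ?_ hx
    have hy0 : y = 0 := by
      rw [← hqs y, hy, mkQ_apply, mapQ_apply, mem_ker.1 hx, Submodule.Quotient.mk_zero]
    exact (Submodule.Quotient.mk_eq_zero D).1 (by simpa [hy0] using hy.symm)
  · refine eq_top_iff.2 fun m _ => ?_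
    obtain ⟨e, he⟩ := D.mkQ_surjective (s ((D.map p).mkQ m))
    have hpe : p e - m ∈ D.map p := by
      have := hqs ((D.map p).mkQ m)
      rw [← he] at this
      exact (Submodule.Quotient.eq _).1 this
    obtain ⟨d, hd, hpd⟩ := hpe
    have hed : D.mkQ (e - d) = D.mkQ e := (Submodule.Quotient.eq D).2 (by simpa using hd)
    exact ⟨e - d, ⟨_, he.symm.trans hed.symm⟩, by simp [hpd]⟩

theorem exists_le_disjoint_ker_map_eq (hi : Function.Injective i) (hp : Function.Surjective p)
    (hip : Function.Exact i p) {D : Submodule R E} (hD : Disjoint D (ker p)) {N : Submodule R M}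
    (hDN : D.map p ≤ N) (hext : Ext1Zero R (.of R (N ⧸ (D.map p).comap N.subtype)) B) :
    ∃ D' : Submodule R E, D ≤ D' ∧ Disjoint D' (ker p) ∧ D'.map p = N := by
  set E' := N.comap p
  set pN : E' →ₗ[R] N := p.restrict fun _ h => h
  have hDE' : D ≤ E' := map_le_iff_le_comap.1 hDN
  have hDN_disj : Disjoint (D.comap E'.subtype) (ker pN) := disjoint_def.2 fun x hxD hx =>
    Subtype.ext (disjoint_def.1 hD x hxD (by simpa [pN, Subtype.ext_iff] using hx))
  have hDN_map : (D.comap E'.subtype).map pN = (D.map p).comap N.subtype := by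
    ext ⟨n, hn⟩
    simp only [mem_map, mem_comap, subtype_apply, Subtype.exists, Subtype.ext_iff]
    constructor
    · rintro ⟨e, he, hd, rfl⟩
      exact ⟨e, hd, rfl⟩
    · rintro ⟨d, hd, rfl⟩
      exact ⟨d, hDE' hd, hd, rfl⟩
  obtain ⟨D', hDD', hD', hD'p⟩ := exists_le_disjoint_ker_map_eq_top
    (fun _ _ h => hi (congrArg Subtype.val h)) (surjective_restrict_comap hp N)
    (hip.codRestrict_restrict N) hDN_disj (hDN_map ▸ hext)
  refine ⟨D'.map E'.subtype, fun d hd => ⟨⟨d, hDE' hd⟩, hDD' hd, rfl⟩, ?_, ?_⟩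
  · refine disjoint_def.2 ?_
    rintro _ ⟨x, hx, rfl⟩ hker
    simp [disjoint_def.1 hD' x hx (Subtype.ext hker)]
  · rw [← map_comp]
    change D'.map (N.subtype ∘ₗ pN) = N
    rw [map_comp, hD'p, map_subtype_top]

end PartialSplitting

namespace IsOrdinalFiltration

variable {M : ModuleCat.{u} R} {σ : Ordinal.{u}} {F : Ordinal.{u} → Submodule R M}

theorem iSup_eq (hF : IsOrdinalFiltration R σ F) {ι : Type*} (a : ι → Ordinal.{u})
    (ha : ∀ i, a i ≤ σ) : ⨆ i, F (a i) = F (⨆ i, a i) := by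
  have hbdd : BddAbove (Set.range a) := ⟨σ, Set.forall_mem_range.2 ha⟩
  have hγ : ⨆ i, a i ≤ σ := ciSup_le' ha
  refine le_antisymm (iSup_le fun i => hF.mono (le_ciSup hbdd i) hγ) ?_
  rcases Ordinal.zero_or_succ_or_isSuccLimit (⨆ i, a i) with h0 | ⟨β, hβ⟩ | hlim
  · simp [h0, hF.zero]
  · obtain ⟨i, hi⟩ := exists_lt_of_lt_ciSup' (hβ ▸ Order.lt_succ β)
    have hai : a i = ⨆ i, a i := le_antisymm (le_ciSup hbdd i) (hβ ▸ Order.succ_le_of_lt hi)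
    exact hai ▸ le_iSup (fun i => F (a i)) i
  · rw [hF.limit hγ hlim]
    refine iSup₂_le fun α hα => ?_
    obtain ⟨i, hi⟩ := exists_lt_of_lt_ciSup' hα
    exact (hF.mono hi.le (ha i)).trans (le_iSup (fun i => F (a i)) i)

theorem exists_disjoint_ker_map_eq_top (hF : IsOrdinalFiltration R σ F) {B : ModuleCat.{u} R}
    {E : Type u} [AddCommGroup E] [Module R E] {i : B →ₗ[R] E} {p : E →ₗ[R] M}
    (hi : Function.Injective i) (hp : Function.Surjective p) (hip : Function.Exact i p)
    (hext : ∀ α < σ, Ext1Zero R (.of R (F (α + 1) ⧸ (F α).comap (F (α + 1)).subtype)) B) :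
    ∃ D : Submodule R E, Disjoint D (ker p) ∧ D.map p = ⊤ := by
  let S : Set (Ordinal.{u} × Submodule R E) :=
    {x | x.1 ≤ σ ∧ Disjoint x.2 (ker p) ∧ x.2.map p = F x.1}
  obtain ⟨⟨α, D⟩, ⟨hασ, hD, hDα⟩, hmax⟩ := zorn_le₀ S fun c hcS hc => by
    have hdir : Directed (· ≤ ·) fun x : c => x.1.2 :=
      (hc.mono_rel fun _ _ h => h.2).directed
    refine ⟨(⨆ x : c, x.1.1, ⨆ x : c, x.1.2), ⟨ciSup_le' fun x => (hcS x.2).1,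
      hdir.disjoint_iSup_left.2 fun x => (hcS x.2).2.1, ?_⟩, fun x hx => ⟨?_, ?_⟩⟩
    · rw [Submodule.map_iSup, ← hF.iSup_eq _ fun x => (hcS x.2).1]
      exact iSup_congr fun x => (hcS x.2).2.2
    · exact le_ciSup ⟨σ, Set.forall_mem_range.2 fun x => (hcS x.2).1⟩ (⟨x, hx⟩ : c)
    · exact le_iSup (fun x : c => x.1.2) ⟨x, hx⟩
  refine ⟨D, hD, ?_⟩
  obtain rfl | hlt := hασ.eq_or_lt
  · rw [hDα, hF.top]
  have hsucc : α + 1 ≤ σ := Order.add_one_le_of_lt hlt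
  obtain ⟨D', hDD', hD', hD'p⟩ := exists_le_disjoint_ker_map_eq hi hp hip hD
    (hDα ▸ hF.mono le_self_add hsucc) (hDα ▸ hext α hlt)
  have hle : α + 1 ≤ α := (hmax (y := (α + 1, D')) ⟨hsucc, hD', hD'p⟩ ⟨le_self_add, hDD'⟩).1
  exact absurd hle (not_le.2 (lt_add_one α))

end IsOrdinalFiltration
end

/-- **Eklof Lemma.**  Let `R` be a ring, `𝓑` a class of `R`-modules, and `M` an
`R`-module admitting a filtration `(F α)_{α ≤ σ}` (an increasing continuous chain of
submodules with `F 0 = 0` and `F σ = M`) such that `Ext¹_R(F (α+1) / F α, B) = 0` for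
every `α < σ` and every `B ∈ 𝓑`.  Then `Ext¹_R(M, B) = 0` for every `B ∈ 𝓑`. -/
theorem stmt_2 (𝓑 : Set (ModuleCat.{u} R)) (M : ModuleCat.{u} R)
    (σ : Ordinal.{u}) (F : Ordinal.{u} → Submodule R M) (hF : IsOrdinalFiltration R σ F)
    (hquot : ∀ (α : Ordinal.{u}), α < σ → ∀ B ∈ 𝓑,
      Ext1Zero R (ModuleCat.of R (↥(F (α + 1)) ⧸
        (Submodule.comap (F (α + 1)).subtype (F α)))) B) :
    ∀ B ∈ 𝓑, Ext1Zero R M B := by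
  intro B hB E i p _ hS
  have hip : Function.Exact i p :=
    (ShortComplex.ShortExact.moduleCat_exact_iff_function_exact _).1 hS.exact
  obtain ⟨D, hD, hDp⟩ := hF.exists_disjoint_ker_map_eq_top hS.moduleCat_injective_f
    hS.moduleCat_surjective_g hip fun α hα => hquot α hα B hB
  obtain ⟨s, hs⟩ := exists_comp_eq_id_of_disjoint_ker_of_map_eq_top hD hDp
  exact ⟨ModuleCat.ofHom s, ModuleCat.hom_ext hs⟩
end

section
/- (Neeman.) Let R be a ring, P a cochain complex of projective right R-modules, and W an acyclic cochain complex of flat right R-modules such that every cycle module Zⁿ(W) = ker(Wⁿ → W^{n+1}) is flat. Then every morphism of cochain complexes P → W is null-homotopic (chain homotopic to the zero map). -/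
/-!
A section `σ` of `linearCombination R id : (Pⁿ →₀ R) → Pⁿ` exists because `Pⁿ` is projective, and
a null-homotopy of `f` is then determined by arbitrary values `H b ∈ Wⁿ` on the elements
`b ∈ Pⁿ⁺¹`, subject to one linear equation `f b = d (H b) + ∑_c σ(d b)_c • H c` per element.
By Zorn's lemma it suffices to extend a solution defined on a set of elements closed under
`b ↦ supp σ(d b)` to one more element `b₀`. The elements reachable from `b₀` outside that set
form a system that is bounded below and finite in each degree, and such a system is solved degree
by degree: as the cycles of `W` are flat, the sequences `0 → Zⁿ → Wⁿ → Zⁿ⁺¹ → 0` are pure, so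
finitely many cycles satisfying finitely many relations lift along `d` to elements satisfying the
same relations, which allows each degree to be corrected without disturbing the previous one.
-/

open CategoryTheory CategoryTheory.Limits

universe u

/-- Flatness of a left module over an arbitrary (possibly noncommutative) ring,
expressed via the standard equational criterion, which is equivalent to the exactness
of the tensor product functor with `M`: whenever `∑ xⱼ • mⱼ = 0` with `xⱼ ∈ R`,
`mⱼ ∈ M`, there are `yᵢ ∈ M` and `aⱼᵢ ∈ R` with `mⱼ = ∑ᵢ aⱼᵢ • yᵢ` for all `j` and
`∑ⱼ xⱼ * aⱼᵢ = 0` for all `i`. -/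
def IsFlat (R : Type u) [Ring R] (M : Type u) [AddCommGroup M] [Module R M] : Prop :=
  ∀ (k : ℕ) (x : Fin k → R) (m : Fin k → M), (∑ j, x j • m j) = 0 →
    ∃ (l : ℕ) (a : Fin k → Fin l → R) (y : Fin l → M),
      (∀ j, m j = ∑ i, a j i • y i) ∧ ∀ i, (∑ j, x j * a j i) = 0

open Finsupp (linearCombination)

theorem sum_smul_sum_smul {R M α β : Type*} [Semiring R] [AddCommMonoid M] [Module R M]
    [Fintype α] [Fintype β] (p : α → R) (q : α → β → R) (v : β → M) :
    ∑ j, p j • ∑ i, q j i • v i = ∑ i, (∑ j, p j * q j i) • v i := by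
  simp only [Finset.smul_sum, Finset.sum_smul, mul_smul]
  exact Finset.sum_comm

theorem sum_mul_sum_mul {R α β : Type*} [Semiring R] [Fintype α] [Fintype β]
    (p : α → R) (q : α → β → R) (r : β → R) :
    ∑ j, p j * ∑ i, q j i * r i = ∑ i, (∑ j, p j * q j i) * r i :=
  sum_smul_sum_smul p q r

theorem Finsupp.linearCombination_congr {R α M : Type*} [Semiring R] [AddCommMonoid M]
    [Module R M] {v w : α → M} {l : α →₀ R} (h : ∀ a ∈ l.support, v a = w a) :
    linearCombination R v l = linearCombination R w l := by
  simp only [Finsupp.linearCombination_apply]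
  exact Finsupp.sum_congr fun a ha => by rw [h a ha]

namespace IsFlat

variable {R : Type u} [Ring R] {M : Type u} [AddCommGroup M] [Module R M]

theorem of_linearEquiv {N : Type u} [AddCommGroup N] [Module R N] (e : M ≃ₗ[R] N)
    (hM : IsFlat R M) : IsFlat R N := by
  intro k x m hm
  obtain ⟨l, a, y, hmy, hxa⟩ := hM k x (e.symm ∘ m) (by
    simpa only [Function.comp_apply, ← map_smul, ← map_sum, map_eq_zero_iff _ e.symm.injective])
  exact ⟨l, a, e ∘ y, fun j => by simpa using congrArg e (hmy j), hxa⟩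

theorem exists_factorization_of_finset (hM : IsFlat R M) {T : Type*} (s : Finset T) :
    ∀ (k : ℕ) (x : T → Fin k → R) (m : Fin k → M), (∀ t ∈ s, ∑ j, x t j • m j = 0) →
      ∃ (l : ℕ) (a : Fin k → Fin l → R) (y : Fin l → M),
        (∀ j, m j = ∑ i, a j i • y i) ∧ ∀ t ∈ s, ∀ i, ∑ j, x t j * a j i = 0 := by
  classical
  induction s using Finset.induction_on with
  | empty =>
    exact fun k _ m _ => ⟨k, fun j i => if j = i then 1 else 0, m, by simp, by simp⟩
  | insert t s _ ih =>
    intro k x m hx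
    obtain ⟨l₁, a₁, y₁, hmy₁, hxa₁⟩ := hM k (x t) m (hx t (Finset.mem_insert_self t s))
    obtain ⟨l, a₂, y, hy₁y, hxa₂⟩ := ih l₁ (fun u i => ∑ j, x u j * a₁ j i) y₁ fun u hu => by
      rw [← sum_smul_sum_smul]
      simpa only [← hmy₁] using hx u (Finset.mem_insert_of_mem hu)
    refine ⟨l, fun j i => ∑ i₁, a₁ j i₁ * a₂ i₁ i, y, fun j => ?_, fun u hu i => ?_⟩
    · simp only [hmy₁ j, ← sum_smul_sum_smul, ← hy₁y]
    · rw [sum_mul_sum_mul]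
      rcases Finset.mem_insert.1 hu with rfl | hu
      · simp [hxa₁]
      · exact hxa₂ u hu i

theorem exists_factorization (hM : IsFlat R M) {J T : Type*} [Fintype J] [Fintype T]
    (x : T → J → R) (m : J → M) (hx : ∀ t, ∑ j, x t j • m j = 0) :
    ∃ (l : ℕ) (a : J → Fin l → R) (y : Fin l → M),
      (∀ j, m j = ∑ i, a j i • y i) ∧ ∀ t i, ∑ j, x t j * a j i = 0 := by
  let e := Fintype.equivFin J
  obtain ⟨l, a, y, hmy, hxa⟩ := hM.exists_factorization_of_finset Finset.univ _
    (fun t j => x t (e.symm j)) (m ∘ e.symm) fun t _ => by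
      simpa only [Function.comp_apply, e.symm.sum_comp (fun j => x t j • m j)] using hx t
  refine ⟨l, fun j => a (e j), y, fun j => by simpa using hmy (e j), fun t i => ?_⟩
  rw [← e.symm.sum_comp]
  simpa using hxa t (Finset.mem_univ t) i

end IsFlat

section

variable {R : Type u} [Ring R] {V : ℤ → Type u} [∀ n, AddCommGroup (V n)] [∀ n, Module R (V n)]

structure ExactWithFlatCycles (d : ∀ n : ℤ, V n →ₗ[R] V (n + 1)) : Prop where
  d_comp_d : ∀ n x, d (n + 1) (d n x) = 0
  exact : ∀ n x, d (n + 1) x = 0 → ∃ y, d n y = x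
  flat_ker : ∀ n, IsFlat R (LinearMap.ker (d n))

namespace ExactWithFlatCycles

variable {d : ∀ n : ℤ, V n →ₗ[R] V (n + 1)}

-- The relations among the `ψ j` factor, by flatness of the cycles, through finitely many cycles
-- with no relations imposed; lifting these one by one preserves the relations.
theorem exists_lift (hV : ExactWithFlatCycles d) (n : ℤ) {J T : Type*} [Fintype J] [Fintype T]
    (r : T → J → R) (ψ : J → V (n + 1)) (hψ : ∀ j, d (n + 1) (ψ j) = 0)
    (hr : ∀ t, ∑ j, r t j • ψ j = 0) :
    ∃ ρ : J → V n, (∀ j, d n (ρ j) = ψ j) ∧ ∀ t, ∑ j, r t j • ρ j = 0 := by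
  obtain ⟨l, a, y, hψy, hra⟩ := (hV.flat_ker (n + 1)).exists_factorization r
    (fun j => ⟨ψ j, hψ j⟩) fun t => Subtype.ext (by simpa using hr t)
  choose v hv using fun i => hV.exact n (y i) (y i).2
  refine ⟨fun j => ∑ i, a j i • v i, fun j => ?_, fun t => ?_⟩
  · simpa [hv] using congrArg Subtype.val (hψy j).symm
  · simp [sum_smul_sum_smul, hra]

theorem exists_cycle_correction (hV : ExactWithFlatCycles d) (m : ℤ) {J K : Type*} [Fintype J]
    [Fintype K] (Λ : J → K → R) (a : J → V m) (b : K → V (m + 1))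
    (hab : ∀ j, d m (a j) = ∑ s, Λ j s • b s) :
    ∃ v : K → V m, ∀ j, d m (a j - ∑ s, Λ j s • v s) = 0 := by
  obtain ⟨ρ, hρ, hΛρ⟩ := hV.exists_lift (m + 1) Λ (fun s => d (m + 1) (b s))
    (fun s => hV.d_comp_d _ _) fun j => by
      simp only [← map_smul, ← map_sum, ← hab, hV.d_comp_d]
  choose v hv using fun s => hV.exact m (b s - ρ s) (by rw [map_sub, hρ, sub_self])
  refine ⟨v, fun j => ?_⟩
  simp [hv, smul_sub, Finset.sum_sub_distrib, hΛρ, hab]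

variable {I : ℤ → Type*} [∀ n, Fintype (I n)] {Λ : ∀ n, I n → I (n + 1) → R}
  {g : ∀ n, I n → V (n + 1)}

-- `v` makes `g (n + 1) - Λ v - d c` a family of cycles satisfying the relations `Λ n`, so a lift
-- `δ` of it with the same relations corrects `c` to `c + δ` without changing `Λ n • c`.
theorem exists_next_solution (hV : ExactWithFlatCycles d)
    (hΛ : ∀ n i s, ∑ j, Λ n i j * Λ (n + 1) j s = 0)
    (hg : ∀ n i, d (n + 1) (g n i) = ∑ j, Λ n i j • g (n + 1) j)
    (n : ℤ) (x : I n → V n) (c : I (n + 1) → V (n + 1))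
    (hxc : ∀ i, g n i = d n (x i) + ∑ j, Λ n i j • c j) :
    ∃ (c' : I (n + 1) → V (n + 1)) (v : I (n + 1 + 1) → V (n + 1 + 1)),
      (∀ i, ∑ j, Λ n i j • c' j = ∑ j, Λ n i j • c j) ∧
      ∀ j, g (n + 1) j = d (n + 1) (c' j) + ∑ s, Λ (n + 1) j s • v s := by
  obtain ⟨v, hv⟩ :=
    hV.exists_cycle_correction _ (Λ (n + 1)) (g (n + 1)) (g (n + 1 + 1)) (hg (n + 1))
  set z : I (n + 1) → V (n + 1 + 1) :=
    fun j => (g (n + 1) j - ∑ s, Λ (n + 1) j s • v s) - d (n + 1) (c j) with hz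
  have hz_cycle : ∀ j, d (n + 1 + 1) (z j) = 0 := fun j => by
    rw [hz, map_sub, hv, hV.d_comp_d, sub_zero]
  have hz_rel : ∀ i, ∑ j, Λ n i j • z j = 0 := fun i => by
    have hdx : d (n + 1) (g n i - ∑ j, Λ n i j • c j) = 0 := by
      rw [hxc i, add_sub_cancel_right, hV.d_comp_d]
    simp only [hz, smul_sub, Finset.sum_sub_distrib, sum_smul_sum_smul, hΛ, zero_smul,
      Finset.sum_const_zero, sub_zero, ← hg]
    simpa only [map_sub, map_sum, map_smul] using hdx
  obtain ⟨δ, hδ, hΛδ⟩ := hV.exists_lift (n + 1) (Λ n) z hz_cycle hz_rel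
  refine ⟨c + δ, v, fun i => ?_, fun j => ?_⟩
  · simp [smul_add, Finset.sum_add_distrib, hΛδ]
  · rw [Pi.add_apply, map_add, hδ, hz]
    dsimp only
    abel

theorem exists_solution_of_isEmpty (hV : ExactWithFlatCycles d)
    (hΛ : ∀ n i s, ∑ j, Λ n i j * Λ (n + 1) j s = 0)
    (hg : ∀ n i, d (n + 1) (g n i) = ∑ j, Λ n i j • g (n + 1) j)
    (n₀ : ℤ) (hI : ∀ n < n₀, IsEmpty (I n)) :
    ∃ x : ∀ n, I n → V n, ∀ n i, g n i = d n (x n i) + ∑ j, Λ n i j • x (n + 1) j := by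
  let State (n : ℤ) := {p : (I n → V n) × (I (n + 1) → V (n + 1)) //
    ∀ i, g n i = d n (p.1 i) + ∑ j, Λ n i j • p.2 j}
  let trivialState (n : ℤ) (hn : n < n₀) : State n := ⟨0, fun i => (hI n hn).elim i⟩
  have next (n : ℤ) (p : State n) : ∃ q : State (n + 1),
      ∀ i, ∑ j, Λ n i j • q.1.1 j = ∑ j, Λ n i j • p.1.2 j := by
    obtain ⟨c', v, hc', hv⟩ := hV.exists_next_solution hΛ hg n p.1.1 p.1.2 p.2
    exact ⟨⟨(c', v), hv⟩, hc'⟩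
  choose next hnext using next
  -- every state below `n₀` is trivial, so the recursion can start at `n₀ - 1`
  let state (n : ℤ) : State n := Int.inductionOn' (motive := State) n (n₀ - 1)
    (trivialState _ (by omega)) (fun k _ => next k) (fun k hk _ => trivialState _ (by omega))
  refine ⟨fun n => (state n).1.1, fun n i => ?_⟩
  rw [(state n).2 i]
  congr 1
  rcases lt_or_ge n n₀ with hn | hn
  · exact (hI n hn).elim i
  · dsimp only
    rw [show state (n + 1) = next n (state n) from Int.inductionOn'_add_one (by omega), hnext]

end ExactWithFlatCycles

section Generators

variable (d : ∀ n : ℤ, V n →ₗ[R] V (n + 1)) {B : ℤ → Type*} (S : ∀ n, B n → B (n + 1) →₀ R)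
  (f : ∀ n, B n → V n)

-- `B n` generates a free complex in degree `n` with differential `S`, `f` is a chain map from it,
-- and `H n` gives the values of a null-homotopy of `f` on the generators of degree `n + 1`.
def HomotopyEq (H : ∀ n, B (n + 1) → V n) (n : ℤ) (b : B (n + 1)) : Prop :=
  f (n + 1) b = d n (H n b) + linearCombination R (H (n + 1)) (S (n + 1) b)

structure PartialHomotopy where
  dom : ∀ n, Set (B (n + 1))
  H : ∀ n, B (n + 1) → V n
  closed : ∀ n, ∀ b ∈ dom n, ∀ c ∈ (S (n + 1) b).support, c ∈ dom (n + 1)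
  homotopyEq : ∀ n, ∀ b ∈ dom n, HomotopyEq d S f H n b
  -- so that `linearCombination R H` only sees the generators in `dom`
  eq_zero : ∀ n b, b ∉ dom n → H n b = 0

variable {d S f}

theorem d_sub_linearCombination (hS : ∀ n b, linearCombination R (S (n + 1)) (S n b) = 0)
    (hf : ∀ n b, d n (f n b) = linearCombination R (f (n + 1)) (S n b))
    (H : ∀ n, B (n + 1) → V n) (n : ℤ) (b : B (n + 1)) :
    d (n + 1) (f (n + 1) b - linearCombination R (H (n + 1)) (S (n + 1) b)) =
      linearCombination R (fun c => f (n + 1 + 1) c - d (n + 1) (H (n + 1) c) -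
        linearCombination R (H (n + 1 + 1)) (S (n + 1 + 1) c)) (S (n + 1) b) := by
  have hlin : linearCombination R (fun c => linearCombination R (H (n + 1 + 1))
      (S (n + 1 + 1) c)) (S (n + 1) b) = 0 := by
    rw [← Finsupp.linearCombination_linearCombination, hS, map_zero]
  rw [map_sub, hf, Finsupp.apply_linearCombination]
  simp only [Finsupp.linearCombination_apply, smul_sub, Finsupp.sum_sub] at hlin ⊢
  rw [hlin, sub_zero]
  rfl

namespace PartialHomotopy

instance : Preorder (PartialHomotopy d S f) where
  le p q := (∀ n, p.dom n ⊆ q.dom n) ∧ ∀ n, ∀ b ∈ p.dom n, q.H n b = p.H n b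
  le_refl _ := ⟨fun _ => subset_rfl, fun _ _ _ => rfl⟩
  le_trans _ _ _ hpq hqr :=
    ⟨fun n => (hpq.1 n).trans (hqr.1 n),
      fun n b hb => (hqr.2 n b (hpq.1 n hb)).trans (hpq.2 n b hb)⟩

theorem bddAbove_of_isChain (c : Set (PartialHomotopy d S f)) (hc : IsChain (· ≤ ·) c) :
    BddAbove c := by
  classical
  have agree : ∀ p ∈ c, ∀ q ∈ c, ∀ n, ∀ b ∈ p.dom n, b ∈ q.dom n → p.H n b = q.H n b := by
    intro p hp q hq n b hbp hbq
    rcases hc.total hp hq with h | h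
    · exact (h.2 n b hbp).symm
    · exact h.2 n b hbq
  let H n b := if h : ∃ p ∈ c, b ∈ p.dom n then h.choose.H n b else 0
  have H_eq : ∀ p ∈ c, ∀ n, ∀ b ∈ p.dom n, H n b = p.H n b := fun p hp n b hb => by
    have h : ∃ p ∈ c, b ∈ p.dom n := ⟨p, hp, hb⟩
    simp only [H, dif_pos h]
    exact agree _ h.choose_spec.1 p hp n b h.choose_spec.2 hb
  refine ⟨⟨fun n => {b | ∃ p ∈ c, b ∈ p.dom n}, H, ?_, ?_, fun n b hb => dif_neg hb⟩,
    fun p hp => ⟨fun n b hb => ⟨p, hp, hb⟩, H_eq p hp⟩⟩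
  · rintro n b ⟨p, hp, hb⟩ c' hc'
    exact ⟨p, hp, p.closed n b hb c' hc'⟩
  · rintro n b ⟨p, hp, hb⟩
    rw [HomotopyEq, H_eq p hp n b hb, Finsupp.linearCombination_congr
      fun c' hc' => H_eq p hp _ c' (p.closed n b hb c' hc')]
    exact p.homotopyEq n b hb

end PartialHomotopy

variable (S) in
inductive ReachableOutside (dom : ∀ n, Set (B (n + 1))) (n₀ : ℤ) (b₀ : B (n₀ + 1)) :
    ∀ n : ℤ, B (n + 1) → Prop
  | base : ReachableOutside dom n₀ b₀ n₀ b₀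
  | step {n : ℤ} {b : B (n + 1)} {c : B (n + 1 + 1)} : ReachableOutside dom n₀ b₀ n b →
      c ∈ (S (n + 1) b).support → c ∉ dom (n + 1) → ReachableOutside dom n₀ b₀ (n + 1) c

namespace ReachableOutside

variable {dom : ∀ n, Set (B (n + 1))} {n₀ : ℤ} {b₀ : B (n₀ + 1)} {n : ℤ} {b : B (n + 1)}

theorem le (h : ReachableOutside S dom n₀ b₀ n b) : n₀ ≤ n := by
  induction h with
  | base => exact le_rfl
  | step _ _ _ ih => omega

theorem notMem (hb₀ : b₀ ∉ dom n₀) (h : ReachableOutside S dom n₀ b₀ n b) : b ∉ dom n := by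
  induction h with
  | base => exact hb₀
  | step _ _ hc _ => exact hc

theorem finite (n : ℤ) : {b | ReachableOutside S dom n₀ b₀ n b}.Finite := by
  classical
  let F (n : ℤ) : Finset (B (n + 1)) := Int.inductionOn' n n₀ {b₀}
    (fun k _ F => F.biUnion fun b => (S (k + 1) b).support) fun _ _ _ => ∅
  refine (F n).finite_toSet.subset fun b (hb : ReachableOutside S dom n₀ b₀ n b) => ?_
  induction hb with
  | base => simp [F, Int.inductionOn'_self]
  | step h hc _ ih =>
    rw [Finset.mem_coe, show F _ = _ from Int.inductionOn'_add_one h.le]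
    exact Finset.mem_biUnion.2 ⟨_, ih, hc⟩

variable (S dom n₀ b₀) in
noncomputable def finset (n : ℤ) : Finset (B (n + 1)) :=
  (finite (S := S) (dom := dom) (b₀ := b₀) n).toFinset

@[simp]
theorem mem_finset : b ∈ finset S dom n₀ b₀ n ↔ ReachableOutside S dom n₀ b₀ n b :=
  Set.Finite.mem_toFinset _

theorem linearCombination_eq_sum (h : ReachableOutside S dom n₀ b₀ n b) {M : Type*} [AddCommGroup M]
    [Module R M] (Y : B (n + 1 + 1) → M) (hY : ∀ c ∈ dom (n + 1), Y c = 0) :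
    linearCombination R Y (S (n + 1) b) =
      ∑ c ∈ finset S dom n₀ b₀ (n + 1), S (n + 1) b c • Y c := by
  classical
  rw [Finsupp.linearCombination_apply, Finsupp.sum,
    Finset.sum_subset (Finset.subset_union_left (s₂ := finset S dom n₀ b₀ (n + 1))),
    ← Finset.sum_subset (Finset.subset_union_right (s₁ := (S (n + 1) b).support))]
  · intro c hc hcN
    by_cases hcd : c ∈ dom (n + 1)
    · rw [hY c hcd, smul_zero]
    · have hcS := (Finset.mem_union.1 hc).resolve_right hcN
      exact absurd (mem_finset.2 (h.step hcS hcd)) hcN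
  · intro c _ hc
    rw [Finsupp.notMem_support_iff.1 hc, zero_smul]

end ReachableOutside

namespace PartialHomotopy

variable {n₀ : ℤ}

noncomputable abbrev reach (p : PartialHomotopy d S f) (b₀ : B (n₀ + 1)) (n : ℤ) :
    Finset (B (n + 1)) :=
  ReachableOutside.finset S p.dom n₀ b₀ n

variable {b₀ : B (n₀ + 1)}

theorem exists_values_on_reach (hV : ExactWithFlatCycles d)
    (hS : ∀ n b, linearCombination R (S (n + 1)) (S n b) = 0)
    (hf : ∀ n b, d n (f n b) = linearCombination R (f (n + 1)) (S n b))
    (p : PartialHomotopy d S f) (hb₀ : b₀ ∉ p.dom n₀) :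
    ∃ x : ∀ n, p.reach b₀ n → V n, ∀ n (i : p.reach b₀ n),
      f (n + 1) i - linearCombination R (p.H (n + 1)) (S (n + 1) i) =
        d n (x n i) + ∑ j : p.reach b₀ (n + 1), S (n + 1) i j • x (n + 1) j := by
  have hreach {n : ℤ} (i : p.reach b₀ n) : ReachableOutside S p.dom n₀ b₀ n i :=
    ReachableOutside.mem_finset.1 i.2
  refine hV.exists_solution_of_isEmpty (I := fun n => p.reach b₀ n)
    (Λ := fun n i j => S (n + 1) i j) ?_ ?_ n₀
    fun n hn => ⟨fun i => by have := (hreach i).le; omega⟩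
  · intro n i s
    have hY : ∀ c ∈ p.dom (n + 1), S (n + 1 + 1) c s = 0 := fun c hc =>
      Finsupp.notMem_support_iff.1 fun hs => (hreach s).notMem hb₀ (p.closed _ c hc s hs)
    calc ∑ j : p.reach b₀ (n + 1), S (n + 1) i j * S (n + 1 + 1) j s
        = ∑ c ∈ p.reach b₀ (n + 1), S (n + 1) i c • S (n + 1 + 1) c s :=
          Finset.sum_coe_sort _ fun c => S (n + 1) i c • S (n + 1 + 1) c s
      _ = linearCombination R (fun c => S (n + 1 + 1) c s) (S (n + 1) i) :=
          ((hreach i).linearCombination_eq_sum _ hY).symm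
      _ = linearCombination R (S (n + 1 + 1)) (S (n + 1) i) s := by
          simp [Finsupp.linearCombination_apply, Finsupp.sum_apply]
      _ = 0 := by rw [hS]; rfl
  · intro n i
    have hY : ∀ c ∈ p.dom (n + 1), f (n + 1 + 1) c - d (n + 1) (p.H (n + 1) c) -
        linearCombination R (p.H (n + 1 + 1)) (S (n + 1 + 1) c) = 0 := fun c hc => by
      rw [sub_sub, sub_eq_zero]
      exact p.homotopyEq _ c hc
    rw [d_sub_linearCombination hS hf, (hreach i).linearCombination_eq_sum _ hY,
      ← Finset.sum_coe_sort]
    refine Finset.sum_congr rfl fun j _ => ?_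
    rw [p.eq_zero _ _ ((hreach j).notMem hb₀), map_zero, sub_zero]

theorem exists_le_mem (hV : ExactWithFlatCycles d)
    (hS : ∀ n b, linearCombination R (S (n + 1)) (S n b) = 0)
    (hf : ∀ n b, d n (f n b) = linearCombination R (f (n + 1)) (S n b))
    (p : PartialHomotopy d S f) (hb₀ : b₀ ∉ p.dom n₀) :
    ∃ q : PartialHomotopy d S f, p ≤ q ∧ b₀ ∈ q.dom n₀ := by
  classical
  obtain ⟨x, hx⟩ := p.exists_values_on_reach hV hS hf hb₀
  let E (n : ℤ) (b : B (n + 1)) : V n :=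
    if h : b ∈ p.reach b₀ n then x n ⟨b, h⟩ else 0
  have E_dom : ∀ n, ∀ b ∈ p.dom n, E n b = 0 := fun n b hb =>
    dif_neg fun h => (ReachableOutside.mem_finset.1 h).notMem hb₀ hb
  have lc_add (n : ℤ) (l : B (n + 1 + 1) →₀ R) :
      linearCombination R (fun c => p.H (n + 1) c + E (n + 1) c) l =
        linearCombination R (p.H (n + 1)) l + linearCombination R (E (n + 1)) l := by
    simp only [Finsupp.linearCombination_apply, smul_add, Finsupp.sum_add]
  refine ⟨⟨fun n => p.dom n ∪ {b | ReachableOutside S p.dom n₀ b₀ n b}, fun n b => p.H n b + E n b,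
    ?_, ?_, ?_⟩, ⟨fun n => Set.subset_union_left, fun n b hb => by simp [E_dom n b hb]⟩,
    Or.inr .base⟩
  · rintro n b (hb | hb) c hc
    · exact Or.inl (p.closed n b hb c hc)
    · by_cases hcd : c ∈ p.dom (n + 1)
      exacts [Or.inl hcd, Or.inr (ReachableOutside.step hb hc hcd)]
  · rintro n b (hb | hb)
    · rw [HomotopyEq, E_dom n b hb, add_zero, Finsupp.linearCombination_congr fun c hc => by
        rw [E_dom _ c (p.closed n b hb c hc), add_zero]]
      exact p.homotopyEq n b hb
    · have hbN := ReachableOutside.mem_finset.2 hb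
      have hE : linearCombination R (E (n + 1)) (S (n + 1) b) =
          ∑ j : p.reach b₀ (n + 1), S (n + 1) b j • x (n + 1) j := by
        rw [hb.linearCombination_eq_sum _ (E_dom _), ← Finset.sum_coe_sort]
        exact Finset.sum_congr rfl fun j _ => by
          rw [show E (n + 1) j = x (n + 1) j from dif_pos j.2]
      rw [HomotopyEq, p.eq_zero n b (hb.notMem hb₀), zero_add, lc_add, hE,
        show E n b = x n ⟨b, hbN⟩ from dif_pos hbN]
      convert sub_eq_iff_eq_add.1 (hx n ⟨b, hbN⟩) using 1
      abel
  · intro n b hb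
    simp only [Set.mem_union, Set.mem_ofPred_eq, not_or] at hb
    rw [p.eq_zero n b hb.1, zero_add]
    exact dif_neg (mt ReachableOutside.mem_finset.1 hb.2)

end PartialHomotopy

theorem ExactWithFlatCycles.exists_homotopyEq (hV : ExactWithFlatCycles d)
    (hS : ∀ n b, linearCombination R (S (n + 1)) (S n b) = 0)
    (hf : ∀ n b, d n (f n b) = linearCombination R (f (n + 1)) (S n b)) :
    ∃ H : ∀ n, B (n + 1) → V n, ∀ n b, HomotopyEq d S f H n b := by
  obtain ⟨m, hm⟩ := zorn_le (α := PartialHomotopy d S f) PartialHomotopy.bddAbove_of_isChain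
  have hdom : ∀ n b, b ∈ m.dom n := by
    by_contra! ⟨n, b, hb⟩
    obtain ⟨q, hmq, hbq⟩ := m.exists_le_mem hV hS hf hb
    exact hb ((hm hmq).1 n hbq)
  exact ⟨m.H, fun n b => m.homotopyEq n b (hdom n b)⟩

end Generators

end

section

variable {R : Type u} [Ring R]

theorem apply_eq_linearCombination {P N : Type*} [AddCommGroup P] [Module R P] [AddCommGroup N]
    [Module R N] {σ : P →ₗ[R] P →₀ R} (hσ : Function.LeftInverse (linearCombination R id) σ)
    (T : P →ₗ[R] N) (x : P) : T x = linearCombination R T (σ x) := by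
  conv_lhs => rw [← hσ x]
  exact Finsupp.apply_linearCombination_id R T (σ x)

namespace CochainComplex

open HomologicalComplex

theorem exactWithFlatCycles {W : CochainComplex (ModuleCat.{u} R) ℤ} (hWac : ∀ n, W.ExactAt n)
    (hWcyc : ∀ n, IsFlat R (W.cycles n)) : ExactWithFlatCycles fun n => (W.d n (n + 1)).hom where
  d_comp_d n x := congr($(W.d_comp_d n (n + 1) (n + 1 + 1)).hom x)
  exact n x hx := by
    have h := hWac (n + 1)
    rw [W.exactAt_iff' n (n + 1) (n + 1 + 1) (by simp) (by simp)] at h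
    exact (ShortComplex.moduleCat_exact_iff _).1 h x hx
  flat_ker n := (hWcyc n).of_linearEquiv
    (W.cyclesIsoSc' (n - 1) n (n + 1) (by simp) (by simp) ≪≫
      ShortComplex.moduleCatCyclesIso _).toLinearEquiv

theorem nonempty_homotopy_zero_of_homotopyEq {P W : CochainComplex (ModuleCat.{u} R) ℤ}
    (f : P ⟶ W) {σ : ∀ n, P.X n →ₗ[R] P.X n →₀ R}
    (hσ : ∀ n, Function.LeftInverse (linearCombination R id) (σ n))
    {H : ∀ n, P.X (n + 1) → W.X n}
    (hH : ∀ n b, HomotopyEq (fun n => (W.d n (n + 1)).hom)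
      (fun n b => σ (n + 1) ((P.d n (n + 1)).hom b)) (fun n => (f.f n).hom) H n b) :
    Nonempty (Homotopy f 0) := by
  let h (i j : ℤ) (hij : (ComplexShape.up ℤ).Rel j i) : P.X i ⟶ W.X j :=
    (P.XIsoOfEq hij.symm).hom ≫ ModuleCat.ofHom (linearCombination R (H j) ∘ₗ σ (j + 1))
  refine ⟨(Homotopy.ofEq ?_).trans (Homotopy.nullHomotopy' h)⟩
  ext k : 1
  obtain ⟨n, rfl⟩ : ∃ n, k = n + 1 := ⟨k - 1, by ring⟩
  rw [Homotopy.nullHomotopicMap'_f (k₂ := n) (k₀ := n + 1 + 1) rfl rfl]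
  ext x
  simp only [h, XIsoOfEq_rfl, Iso.refl_hom, Category.id_comp, ModuleCat.hom_add,
    ModuleCat.hom_comp, ModuleCat.hom_ofHom, LinearMap.add_apply, LinearMap.comp_apply]
  rw [apply_eq_linearCombination (hσ (n + 1)) (f.f (n + 1)).hom x,
    show linearCombination R (H (n + 1)) (σ (n + 1 + 1) ((P.d (n + 1) (n + 1 + 1)).hom x)) = _ from
      apply_eq_linearCombination (hσ (n + 1))
        (linearCombination R (H (n + 1)) ∘ₗ σ (n + 1 + 1) ∘ₗ (P.d (n + 1) (n + 1 + 1)).hom) x,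
    Finsupp.apply_linearCombination]
  simp only [Finsupp.linearCombination_apply, ← Finsupp.sum_add]
  refine Finsupp.sum_congr fun b _ => ?_
  rw [← smul_add]
  exact congrArg _ ((hH n b).trans (add_comm _ _))

end CochainComplex

end

theorem stmt_15_general (R : Type u) [Ring R]
    (P W : CochainComplex (ModuleCat.{u} R) ℤ)
    (hP : ∀ n : ℤ, Projective (P.X n))
    (hWac : ∀ n : ℤ, W.ExactAt n)
    (hWcyc : ∀ n : ℤ, IsFlat R ↥(W.cycles n))
    (f : P ⟶ W) : Nonempty (Homotopy f 0) := by
  choose σ hσ using fun n => Module.projective_def.1 ((IsProjective.iff_projective _).2 (hP n))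
  have hS (n : ℤ) (b : P.X n) : linearCombination R (fun c => σ (n + 1 + 1)
      ((P.d (n + 1) (n + 1 + 1)).hom c)) (σ (n + 1) ((P.d n (n + 1)).hom b)) = 0 := by
    have hdd := congr($(P.d_comp_d n (n + 1) (n + 1 + 1)).hom b)
    simp only [ModuleCat.hom_comp, LinearMap.comp_apply, ModuleCat.hom_zero,
      LinearMap.zero_apply] at hdd
    exact (apply_eq_linearCombination (hσ (n + 1))
      (σ (n + 1 + 1) ∘ₗ (P.d (n + 1) (n + 1 + 1)).hom) _).symm.trans (by simp [hdd])
  have hf (n : ℤ) (b : P.X n) : (W.d n (n + 1)).hom ((f.f n).hom b) =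
      linearCombination R (f.f (n + 1)).hom (σ (n + 1) ((P.d n (n + 1)).hom b)) := by
    rw [← apply_eq_linearCombination (hσ (n + 1))]
    simpa only [ModuleCat.hom_comp, LinearMap.comp_apply] using congr($(f.comm n (n + 1)).hom b)
  obtain ⟨H, hH⟩ := (CochainComplex.exactWithFlatCycles hWac hWcyc).exists_homotopyEq
    (S := fun n b => σ (n + 1) ((P.d n (n + 1)).hom b)) (f := fun n => (f.f n).hom) hS hf
  exact CochainComplex.nonempty_homotopy_zero_of_homotopyEq f hσ hH

/-- **(Neeman.)**  Let `R` be a ring, `P` a cochain complex of projective `R`-modules,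
and `W` an acyclic cochain complex of flat `R`-modules such that every cycle module
`Zⁿ(W) = ker(Wⁿ → W^{n+1})` is flat.  Then every morphism of cochain complexes
`P → W` is null-homotopic. -/
theorem stmt_15 (R : Type u) [Ring R]
    (P W : CochainComplex (ModuleCat.{u} R) ℤ)
    (hP : ∀ n : ℤ, Projective (P.X n))
    (hWac : ∀ n : ℤ, W.ExactAt n)
    (hWflat : ∀ n : ℤ, IsFlat R ↥(W.X n))
    (hWcyc : ∀ n : ℤ, IsFlat R ↥(W.cycles n))
    (f : P ⟶ W) : Nonempty (Homotopy f 0) :=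
  stmt_15_general R P W hP hWac hWcyc f
end
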